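/- arXiv:1904.03842 — 6 statements merged into one kernel-verified Lean document; each statement's English description precedes it below -/
import Mathlib

section
/- In the hyperbolic region c_p|ξ'| < |τ|, with ξ₃ᵖ = √(c_p⁻²τ² − |ξ'|²) > 0 and ξ₃ˢ = √(c_s⁻²τ² − |ξ'|²) > 0, the quantity −ρ(c_p²|ξ'|² − τ²)·((2μ|ξ'|² − ρτ²)² + 4μ²|ξ'|²ξ₃ᵖξ₃ˢ) is strictly positive, provided (2μ|ξ'|² − ρτ², ξ') ≠ 0. -/
open scoped BigOperators

/-! Both factors are positive. The first is `ρ(τ² − c_p²|ξ'|²)`. The second is a square plus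
`4μ²|ξ'|²ξ₃ᵖξ₃ˢ ≥ 0`; the hyperbolic condition (with `c_s < c_p`) makes both radicands positive,
so the second summand vanishes only when `ξ' = 0`, and then the square is nonzero by assumption. -/

lemma sum_sq_eq_zero_iff {ι R : Type*} [Fintype ι] [Semiring R] [LinearOrder R]
    [IsStrictOrderedRing R] [ExistsAddOfLE R] (x : ι → R) :
    ∑ i, x i ^ 2 = 0 ↔ x = 0 := by
  simp only [sq, Finset.sum_mul_self_eq_zero_iff, Finset.mem_univ, true_implies, funext_iff,
    Pi.zero_apply]

lemma sub_pos_of_sq_mul_lt {c s t : ℝ} (hc : c ≠ 0) (h : c ^ 2 * s < t) : 0 < t / c ^ 2 - s :=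
  sub_pos.2 <| (lt_div_iff₀ (by positivity)).2 (by linarith)

lemma sq_add_mul_sqrt_mul_sqrt_pos {x m s p q : ℝ} (hm : 0 < m) (hs : 0 ≤ s) (hp : 0 < p)
    (hq : 0 < q) (hnd : ¬ (x = 0 ∧ s = 0)) : 0 < x ^ 2 + m * s * √p * √q := by
  rcases hs.eq_or_lt with rfl | hs
  · have hx : x ≠ 0 := fun hx => hnd ⟨hx, rfl⟩
    positivity
  · exact add_pos_of_nonneg_of_pos (sq_nonneg x) (by positivity)

theorem stmt_6_general (mu rho cs cp τ : ℝ) (hmu : 0 < mu) (hrho : 0 < rho)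
    (hcs : cs = Real.sqrt (mu / rho)) (hcscp : cs < cp)
    (ξ' : Fin 2 → ℝ)
    (hhyp : cp ^ 2 * (∑ i, ξ' i ^ 2) < τ ^ 2)
    (hnd : ¬ (2 * mu * (∑ i, ξ' i ^ 2) - rho * τ ^ 2 = 0 ∧ ξ' = 0)) :
    0 < -rho * (cp ^ 2 * (∑ i, ξ' i ^ 2) - τ ^ 2)
        * ((2 * mu * (∑ i, ξ' i ^ 2) - rho * τ ^ 2) ^ 2
            + 4 * mu ^ 2 * (∑ i, ξ' i ^ 2)
              * Real.sqrt (τ ^ 2 / cp ^ 2 - (∑ i, ξ' i ^ 2))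
              * Real.sqrt (τ ^ 2 / cs ^ 2 - (∑ i, ξ' i ^ 2))) := by
  rw [← sum_sq_eq_zero_iff] at hnd
  set S := ∑ i, ξ' i ^ 2
  have hS : 0 ≤ S := Finset.sum_nonneg fun i _ => sq_nonneg _
  have hcs0 : 0 < cs := hcs ▸ Real.sqrt_pos.2 (div_pos hmu hrho)
  have hcp0 : 0 < cp := hcs0.trans hcscp
  have hcs_hyp : cs ^ 2 * S < τ ^ 2 :=
    calc cs ^ 2 * S ≤ cp ^ 2 * S :=
          mul_le_mul_of_nonneg_right (pow_le_pow_left₀ hcs0.le hcscp.le 2) hS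
      _ < τ ^ 2 := hhyp
  refine mul_pos (mul_pos_of_neg_of_neg (neg_neg_of_pos hrho) (sub_neg.2 hhyp)) ?_
  exact sq_add_mul_sqrt_mul_sqrt_pos (by positivity) hS
    (sub_pos_of_sq_mul_lt hcp0.ne' hhyp) (sub_pos_of_sq_mul_lt hcs0.ne' hcs_hyp) hnd

/-- In the hyperbolic region `c_p|ξ'| < |τ|`, the determinant
`−ρ(c_p²|ξ'|² − τ²)((2μ|ξ'|² − ρτ²)² + 4μ²|ξ'|²ξ₃ᵖξ₃ˢ)` of `σ_p(M_out)` is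
strictly positive, provided `(2μ|ξ'|² − ρτ², ξ') ≠ 0`. -/
theorem stmt_6 (mu rho cs cp τ : ℝ) (hmu : 0 < mu) (hrho : 0 < rho)
    (hcs : cs = Real.sqrt (mu / rho)) (hcscp : cs < cp) (hτ : τ ≠ 0)
    (ξ' : Fin 2 → ℝ)
    (hhyp : cp ^ 2 * (∑ i, ξ' i ^ 2) < τ ^ 2)
    (hnd : ¬ (2 * mu * (∑ i, ξ' i ^ 2) - rho * τ ^ 2 = 0 ∧ ξ' = 0)) :
    0 < -rho * (cp ^ 2 * (∑ i, ξ' i ^ 2) - τ ^ 2)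
        * ((2 * mu * (∑ i, ξ' i ^ 2) - rho * τ ^ 2) ^ 2
            + 4 * mu ^ 2 * (∑ i, ξ' i ^ 2)
              * Real.sqrt (τ ^ 2 / cp ^ 2 - (∑ i, ξ' i ^ 2))
              * Real.sqrt (τ ^ 2 / cs ^ 2 - (∑ i, ξ' i ^ 2))) :=
  stmt_6_general mu rho cs cp τ hmu hrho hcs hcscp ξ' hhyp hnd
end

section
/- Define R(s) = (s−2)² − 4(1−s)^{1/2}(1−κ s)^{1/2} for 0 < κ < 1. Then R has a unique root s₀ in the open interval (0,1), and this root is simple (R'(s₀) ≠ 0). -/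
/-!
Write `a = √(1−s)`, `b = √(1−κs)`. Multiplying `R(s)` by the positive factor `(s−2)² + 4ab`
rationalises it: `R(s)·((s−2)² + 4ab) = s·Q(s)` with the cubic
`Q(s) = s³ − 8s² + (24−16κ)s − 16(1−κ)`, so the roots of `R` in `(0,1)` are those of `Q`.
In the variable `t = 1 − s`, `Q = 1 − (11−16κ)t − 5t² − t³`, so `Q(s) = 0` says
`1/t − 5t − t² = 11 − 16κ`; the left side is strictly decreasing in `t > 0`, which gives
uniqueness, and `Q(0) < 0 < Q(1)` gives existence. At a root, differentiating `R` and eliminating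
`κ` with `Q(s) = 0` gives `8(1−s)·ab·R'(s) = s(1 + 5t² + 2t³) > 0`.
-/

open Set

noncomputable def rayleigh (κ s : ℝ) : ℝ :=
  (s - 2) ^ 2 - 4 * √(1 - s) * √(1 - κ * s)

def rayleighCubic (κ s : ℝ) : ℝ :=
  s ^ 3 - 8 * s ^ 2 + (24 - 16 * κ) * s - 16 * (1 - κ)

section

variable {κ s : ℝ}

theorem rayleigh_mul_eq (h1 : s ≤ 1) (hκs : κ * s ≤ 1) :
    rayleigh κ s * ((s - 2) ^ 2 + 4 * √(1 - s) * √(1 - κ * s)) = s * rayleighCubic κ s := by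
  have ha : √(1 - s) ^ 2 = 1 - s := Real.sq_sqrt (by linarith)
  have hb : √(1 - κ * s) ^ 2 = 1 - κ * s := Real.sq_sqrt (by linarith)
  unfold rayleigh rayleighCubic
  linear_combination (-16) * √(1 - κ * s) ^ 2 * ha - 16 * (1 - s) * hb

theorem rayleigh_eq_zero_iff (h0 : 0 < s) (h1 : s ≤ 1) (hκs : κ * s ≤ 1) :
    rayleigh κ s = 0 ↔ rayleighCubic κ s = 0 := by
  have hfactor : 0 < (s - 2) ^ 2 + 4 * √(1 - s) * √(1 - κ * s) := by
    have : 0 ≤ √(1 - s) * √(1 - κ * s) := by positivity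
    nlinarith
  have hprod := rayleigh_mul_eq h1 hκs
  constructor
  · intro hR
    rw [hR, zero_mul, eq_comm] at hprod
    exact (mul_eq_zero.1 hprod).resolve_left h0.ne'
  · intro hQ
    rw [hQ, mul_zero] at hprod
    exact (mul_eq_zero.1 hprod).resolve_right hfactor.ne'

theorem rayleighCubic_zero : rayleighCubic κ 0 = -16 * (1 - κ) := by
  unfold rayleighCubic; ring

theorem rayleighCubic_one : rayleighCubic κ 1 = 1 := by
  unfold rayleighCubic; ring

theorem continuous_rayleighCubic : Continuous (rayleighCubic κ) := by
  unfold rayleighCubic; fun_prop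

theorem exists_rayleighCubic_eq_zero (hκ1 : κ < 1) :
    ∃ s ∈ Ioo (0 : ℝ) 1, rayleighCubic κ s = 0 := by
  have hsign : (0 : ℝ) ∈ Ioo (rayleighCubic κ 0) (rayleighCubic κ 1) := by
    rw [rayleighCubic_zero, rayleighCubic_one]
    constructor <;> linarith
  exact intermediate_value_Ioo zero_le_one continuous_rayleighCubic.continuousOn hsign

theorem strictAntiOn_inv_sub_five_mul_sub_sq :
    StrictAntiOn (fun t : ℝ => t⁻¹ - 5 * t - t ^ 2) (Ioi 0) := by
  intro t ht u hu htu
  have hinv : u⁻¹ < t⁻¹ := inv_strictAntiOn ht hu htu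
  simp only
  nlinarith [mem_Ioi.1 ht]

theorem rayleighCubic_eq_zero_iff (h1 : s < 1) :
    rayleighCubic κ s = 0 ↔ (1 - s)⁻¹ - 5 * (1 - s) - (1 - s) ^ 2 = 11 - 16 * κ := by
  have ht : 1 - s ≠ 0 := by linarith
  unfold rayleighCubic
  constructor <;> intro h
  · field_simp
    linear_combination h
  · field_simp at h
    linear_combination h

theorem eq_of_rayleighCubic_eq_zero {s' : ℝ} (h1 : s < 1) (h1' : s' < 1)
    (hQ : rayleighCubic κ s = 0) (hQ' : rayleighCubic κ s' = 0) : s = s' := by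
  have h := strictAntiOn_inv_sub_five_mul_sub_sq.injOn (sub_pos.2 h1) (sub_pos.2 h1')
    (((rayleighCubic_eq_zero_iff h1).1 hQ).trans ((rayleighCubic_eq_zero_iff h1').1 hQ').symm)
  linarith

theorem hasDerivAt_rayleigh (h1 : s < 1) (hκs : κ * s < 1) :
    HasDerivAt (rayleigh κ)
      (2 * (s - 2) + 2 * √(1 - κ * s) / √(1 - s) + 2 * κ * √(1 - s) / √(1 - κ * s)) s := by
  have ha : HasDerivAt (fun x => √(1 - x)) (-1 / (2 * √(1 - s))) s :=
    ((hasDerivAt_id' s).const_sub 1).sqrt (by linarith)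
  have hb : HasDerivAt (fun x => √(1 - κ * x)) (-κ / (2 * √(1 - κ * s))) s := by
    simpa using (((hasDerivAt_id' s).const_mul κ).const_sub 1).sqrt (by linarith)
  have hsq : HasDerivAt (fun x : ℝ => (x - 2) ^ 2) (2 * (s - 2)) s := by
    simpa using ((hasDerivAt_id s).sub_const 2).fun_pow 2
  refine (hsq.fun_sub ((ha.const_mul 4).fun_mul hb)).congr_deriv ?_
  have ha0 : √(1 - s) ≠ 0 := (Real.sqrt_pos.2 (by linarith)).ne'
  have hb0 : √(1 - κ * s) ≠ 0 := (Real.sqrt_pos.2 (by linarith)).ne'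
  generalize √(1 - s) = a at *
  generalize √(1 - κ * s) = b at *
  field_simp
  ring

theorem deriv_rayleigh_pos (h0 : 0 < s) (h1 : s < 1) (hκs : κ * s < 1)
    (hR : rayleigh κ s = 0) : 0 < deriv (rayleigh κ) s := by
  have ha : 0 < √(1 - s) := Real.sqrt_pos.2 (by linarith)
  have hb : 0 < √(1 - κ * s) := Real.sqrt_pos.2 (by linarith)
  have ha2 : √(1 - s) ^ 2 = 1 - s := Real.sq_sqrt (by linarith)
  have hb2 : √(1 - κ * s) ^ 2 = 1 - κ * s := Real.sq_sqrt (by linarith)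
  have hQ : rayleighCubic κ s = 0 := (rayleigh_eq_zero_iff h0 h1.le hκs.le).1 hR
  unfold rayleigh at hR
  unfold rayleighCubic at hQ
  rw [(hasDerivAt_rayleigh h1 hκs).deriv]
  generalize √(1 - s) = a at *
  generalize √(1 - κ * s) = b at *
  have key : 8 * (1 - s) * (a * b) * (2 * (s - 2) + 2 * b / a + 2 * κ * a / b) =
      s * (1 + 5 * (1 - s) ^ 2 + 2 * (1 - s) ^ 3) := by
    field_simp
    linear_combination (-(4 * (1 - s) * (s - 2))) * hR + 16 * (1 - s) * hb2
      + 16 * κ * (1 - s) * ha2 + (1 - 2 * s) * hQ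
  have hpos : 0 < s * (1 + 5 * (1 - s) ^ 2 + 2 * (1 - s) ^ 3) := by
    have : 0 < 1 - s := by linarith
    positivity
  rw [← key] at hpos
  exact pos_of_mul_pos_right hpos (by positivity)

end

theorem stmt_7_general (κ : ℝ) (hκ1 : κ < 1) :
    let R : ℝ → ℝ := fun s =>
      (s - 2) ^ 2 - 4 * Real.sqrt (1 - s) * Real.sqrt (1 - κ * s)
    (∃! s₀ : ℝ, s₀ ∈ Set.Ioo (0 : ℝ) 1 ∧ R s₀ = 0) ∧
    (∀ s₀ ∈ Set.Ioo (0 : ℝ) 1, R s₀ = 0 → deriv R s₀ ≠ 0) := by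
  intro R
  have hκs : ∀ s ∈ Ioo (0 : ℝ) 1, κ * s < 1 := fun s hs => by nlinarith [hs.1, hs.2]
  refine ⟨?_, fun s hs hR => (deriv_rayleigh_pos hs.1 hs.2 (hκs s hs) hR).ne'⟩
  obtain ⟨s₀, hs₀, hQ₀⟩ := exists_rayleighCubic_eq_zero hκ1
  refine ⟨s₀, ⟨hs₀, (rayleigh_eq_zero_iff hs₀.1 hs₀.2.le (hκs s₀ hs₀).le).2 hQ₀⟩, ?_⟩
  rintro s ⟨hs, hR⟩
  exact eq_of_rayleighCubic_eq_zero hs.2 hs₀.2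
    ((rayleigh_eq_zero_iff hs.1 hs.2.le (hκs s hs).le).1 hR) hQ₀

/-- The Rayleigh function `R(s) = (s−2)² − 4√(1−s)√(1−κs)`, `0 < κ < 1`, has a
unique root `s₀` in `(0,1)`, and this root is simple. -/
theorem stmt_7 (κ : ℝ) (hκ0 : 0 < κ) (hκ1 : κ < 1) :
    let R : ℝ → ℝ := fun s =>
      (s - 2) ^ 2 - 4 * Real.sqrt (1 - s) * Real.sqrt (1 - κ * s)
    (∃! s₀ : ℝ, s₀ ∈ Set.Ioo (0 : ℝ) 1 ∧ R s₀ = 0) ∧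
    (∀ s₀ ∈ Set.Ioo (0 : ℝ) 1, R s₀ = 0 → deriv R s₀ ≠ 0) :=
  stmt_7_general κ hκ1
end

section
/- For 1 < s < c_p²/c_s², the complex quantity R(s) = (s−2)² + 4i(s−1)^{1/2}(1−c_s²c_p⁻²s)^{1/2} is nonzero. -/
/-! The real part `(s - 2)²` may vanish, but the imaginary part `4√(s - 1)√(1 - c_s²c_p⁻²s)` cannot:
`s > 1` makes the first root positive, and `s < c_p²/c_s²` makes the second radicand positive. -/

lemma div_mul_lt_one_of_lt_div {K : Type*} [Field K] [LinearOrder K] [IsStrictOrderedRing K]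
    {a b s : K} (hs : 0 < s) (h : s < b / a) : a / b * s < 1 := by
  rw [← inv_div]
  exact (inv_mul_lt_one₀ (hs.trans h)).mpr h

lemma Complex.im_ofReal_sq_add_four_I_mul_ofReal (x y : ℝ) :
    ((x : ℂ) ^ 2 + 4 * Complex.I * (y : ℂ)).im = 4 * y := by
  simp [pow_two]

theorem stmt_9_general (cs cp s : ℝ)
    (hs1 : 1 < s) (hs2 : s < cp ^ 2 / cs ^ 2) :
    ((s - 2 : ℝ) : ℂ) ^ 2
      + 4 * Complex.I
        * ((Real.sqrt (s - 1) * Real.sqrt (1 - cs ^ 2 / cp ^ 2 * s) : ℝ) : ℂ) ≠ 0 := by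
  have h_radicand : cs ^ 2 / cp ^ 2 * s < 1 := div_mul_lt_one_of_lt_div (by linarith) hs2
  have h_sqrt₁ : 0 < Real.sqrt (s - 1) := Real.sqrt_pos.mpr (by linarith)
  have h_sqrt₂ : 0 < Real.sqrt (1 - cs ^ 2 / cp ^ 2 * s) := Real.sqrt_pos.mpr (by linarith)
  intro h
  have h_im := congrArg Complex.im h
  rw [Complex.im_ofReal_sq_add_four_I_mul_ofReal, Complex.zero_im] at h_im
  exact (mul_pos four_pos (mul_pos h_sqrt₁ h_sqrt₂)).ne' h_im

/-- In the mixed region `1 < s < c_p²/c_s²`, the Rayleigh function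
`R(s) = (s−2)² + 4i√(s−1)√(1−c_s²c_p⁻²s)` does not vanish. -/
theorem stmt_9 (cs cp s : ℝ) (hcs : 0 < cs) (hcscp : cs < cp)
    (hs1 : 1 < s) (hs2 : s < cp ^ 2 / cs ^ 2) :
    ((s - 2 : ℝ) : ℂ) ^ 2
      + 4 * Complex.I
        * ((Real.sqrt (s - 1) * Real.sqrt (1 - cs ^ 2 / cp ^ 2 * s) : ℝ) : ℂ) ≠ 0 :=
  stmt_9_general cs cp s hs1 hs2
end

section
/- Suppose complex amplitudes satisfy the Knott system: (P_R+P_I) − cot θ₊ˢ(SV_R − SV_I) = P_T + cot θ₋ˢ SV_T; cot θ₊ᵖ(P_R−P_I) + (SV_R+SV_I) = −cot θ₋ᵖ P_T + SV_T; 2μ₊cot θ₊ᵖ(P_R−P_I) + μ₊(1−cot²θ₊ˢ)(SV_R+SV_I) = −2μ₋cot θ₋ᵖ P_T + μ₋(1−cot²θ₋ˢ)SV_T; and −μ₊(1−cot²θ₊ˢ)(P_R+P_I) + 2μ₊cot θ₊ˢ(SV_R−SV_I) = −μ₋(1−cot²θ₋ˢ)P_T − 2μ₋cot θ₋ˢ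 SV_T. If all amplitudes are real, then μ₊(cot θ₊ᵖ/sin²θ₊ˢ)(P_R² − P_I²) + μ₊(cot θ₊ˢ/sin²θ₊ˢ)(SV_R² − SV_I²) + μ₋(cot θ₋ᵖ/sin²θ₋ˢ)P_T² + μ₋(cot θ₋ˢ/sin²θ₋ˢ)SV_T² = 0. -/
/-!
Pair the first Knott equation with the third and the second with the fourth. On each side of
the interface the sum of the two products collapses to `μ (1 + cot² θˢ)` times the energy flux
`cot θᵖ P² + cot θˢ SV²`, and `1 + cot² θˢ = 1 / sin² θˢ`.
-/

open Real

theorem knott_pairing_incident (μ a b PR PI SVR SVI : ℝ) :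
    ((PR + PI) - b * (SVR - SVI)) * (2 * μ * a * (PR - PI) + μ * (1 - b ^ 2) * (SVR + SVI))
      + (a * (PR - PI) + (SVR + SVI)) * (-μ * (1 - b ^ 2) * (PR + PI) + 2 * μ * b * (SVR - SVI))
      = μ * (1 + b ^ 2) * (a * (PR ^ 2 - PI ^ 2) + b * (SVR ^ 2 - SVI ^ 2)) := by
  ring

theorem knott_pairing_transmitted (μ c d PT SVT : ℝ) :
    (PT + d * SVT) * (-2 * μ * c * PT + μ * (1 - d ^ 2) * SVT)
      + (-c * PT + SVT) * (-μ * (1 - d ^ 2) * PT - 2 * μ * d * SVT)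
      = -(μ * (1 + d ^ 2) * (c * PT ^ 2 + d * SVT ^ 2)) := by
  ring

theorem knott_energy_balance (μp μm a b c d PI PR PT SVI SVR SVT : ℝ)
    (h1 : (PR + PI) - b * (SVR - SVI) = PT + d * SVT)
    (h2 : a * (PR - PI) + (SVR + SVI) = -c * PT + SVT)
    (h3 : 2 * μp * a * (PR - PI) + μp * (1 - b ^ 2) * (SVR + SVI)
        = -2 * μm * c * PT + μm * (1 - d ^ 2) * SVT)
    (h4 : -μp * (1 - b ^ 2) * (PR + PI) + 2 * μp * b * (SVR - SVI)
        = -μm * (1 - d ^ 2) * PT - 2 * μm * d * SVT) :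
    μp * (1 + b ^ 2) * (a * (PR ^ 2 - PI ^ 2) + b * (SVR ^ 2 - SVI ^ 2))
      + μm * (1 + d ^ 2) * (c * PT ^ 2 + d * SVT ^ 2) = 0 := by
  have h := knott_pairing_incident μp a b PR PI SVR SVI
  rw [h1, h2, h3, h4, knott_pairing_transmitted] at h
  linarith

theorem div_sin_sq_eq_mul_one_add_cot_sq {x : ℝ} (hx : sin x ≠ 0) (y : ℝ) :
    y / sin x ^ 2 = y * (1 + (cos x / sin x) ^ 2) := by
  field_simp
  linear_combination -y * sin_sq_add_cos_sq x

theorem stmt_16_general (μp μm : ℝ)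
    (θpp θps θmp θms : ℝ)
    (hθps : θps ∈ Set.Ioo (0 : ℝ) (π / 2))
    (hθms : θms ∈ Set.Ioo (0 : ℝ) (π / 2))
    (PI PR PT SVI SVR SVT : ℝ)
    (h1 : (PR + PI) - (cos θps / sin θps) * (SVR - SVI)
        = PT + (cos θms / sin θms) * SVT)
    (h2 : (cos θpp / sin θpp) * (PR - PI) + (SVR + SVI)
        = -(cos θmp / sin θmp) * PT + SVT)
    (h3 : 2 * μp * (cos θpp / sin θpp) * (PR - PI)
          + μp * (1 - (cos θps / sin θps) ^ 2) * (SVR + SVI)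
        = -2 * μm * (cos θmp / sin θmp) * PT
          + μm * (1 - (cos θms / sin θms) ^ 2) * SVT)
    (h4 : -μp * (1 - (cos θps / sin θps) ^ 2) * (PR + PI)
          + 2 * μp * (cos θps / sin θps) * (SVR - SVI)
        = -μm * (1 - (cos θms / sin θms) ^ 2) * PT
          - 2 * μm * (cos θms / sin θms) * SVT) :
    μp * ((cos θpp / sin θpp) / sin θps ^ 2) * (PR ^ 2 - PI ^ 2)
      + μp * ((cos θps / sin θps) / sin θps ^ 2) * (SVR ^ 2 - SVI ^ 2)
      + μm * ((cos θmp / sin θmp) / sin θms ^ 2) * PT ^ 2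
      + μm * ((cos θms / sin θms) / sin θms ^ 2) * SVT ^ 2 = 0 := by
  have hps : sin θps ≠ 0 := (sin_pos_of_mem_Ioo ⟨hθps.1, hθps.2.trans (half_lt_self pi_pos)⟩).ne'
  have hms : sin θms ≠ 0 := (sin_pos_of_mem_Ioo ⟨hθms.1, hθms.2.trans (half_lt_self pi_pos)⟩).ne'
  simp only [div_sin_sq_eq_mul_one_add_cot_sq hps, div_sin_sq_eq_mul_one_add_cot_sq hms]
  linear_combination knott_energy_balance μp μm _ _ _ _ PI PR PT SVI SVR SVT h1 h2 h3 h4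

/-- Knott's energy equality: real amplitudes satisfying the Knott system at an
elastic interface satisfy the energy balance identity. -/
theorem stmt_16 (μp μm : ℝ) (hμp : 0 < μp) (hμm : 0 < μm)
    (θpp θps θmp θms : ℝ)
    (hθpp : θpp ∈ Set.Ioo (0 : ℝ) (π / 2)) (hθps : θps ∈ Set.Ioo (0 : ℝ) (π / 2))
    (hθmp : θmp ∈ Set.Ioo (0 : ℝ) (π / 2)) (hθms : θms ∈ Set.Ioo (0 : ℝ) (π / 2))
    (PI PR PT SVI SVR SVT : ℝ)
    (h1 : (PR + PI) - (cos θps / sin θps) * (SVR - SVI)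
        = PT + (cos θms / sin θms) * SVT)
    (h2 : (cos θpp / sin θpp) * (PR - PI) + (SVR + SVI)
        = -(cos θmp / sin θmp) * PT + SVT)
    (h3 : 2 * μp * (cos θpp / sin θpp) * (PR - PI)
          + μp * (1 - (cos θps / sin θps) ^ 2) * (SVR + SVI)
        = -2 * μm * (cos θmp / sin θmp) * PT
          + μm * (1 - (cos θms / sin θms) ^ 2) * SVT)
    (h4 : -μp * (1 - (cos θps / sin θps) ^ 2) * (PR + PI)
          + 2 * μp * (cos θps / sin θps) * (SVR - SVI)
        = -μm * (1 - (cos θms / sin θms) ^ 2) * PT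
          - 2 * μm * (cos θms / sin θms) * SVT) :
    μp * ((cos θpp / sin θpp) / sin θps ^ 2) * (PR ^ 2 - PI ^ 2)
      + μp * ((cos θps / sin θps) / sin θps ^ 2) * (SVR ^ 2 - SVI ^ 2)
      + μm * ((cos θmp / sin θmp) / sin θms ^ 2) * PT ^ 2
      + μm * ((cos θms / sin θms) / sin θms ^ 2) * SVT ^ 2 = 0 :=
  stmt_16_general μp μm θpp θps θmp θms hθps hθms PI PR PT SVI SVR SVT h1 h2 h3 h4
end

section
/- Suppose real numbers SH_I, SH_R, SH_T satisfy ξ₊(SH_R − SH_I) = −ξ₋ SH_T and μ₊ξ₊²(SH_R + SH_I) = μ₋ξ₋² SH_T, with ξ₊, ξ₋, μ₊, μ₋ > 0 and writing μ± = ρ± c_{s,±}². Then ρ₊ c_{s,+}² ξ₊³ (SH_R² − SH_I²) + ρ₋ c_{s,-}² ξ₋³ SH_T² = 0; in particular if SH_I ≠ 0 then SH_T ≠ 0. -/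
/-!
Multiplying the two interface conditions, the left sides give `μ₊ξ₊³(SH_R² − SH_I²)` and the right
sides `−μ₋ξ₋³SH_T²`, which is the energy identity. If `SH_T = 0`, the conditions force
`SH_R = SH_I` and `SH_R = −SH_I`, hence `SH_I = 0`.
-/

theorem interface_energy_identity {R : Type*} [CommRing R] {a b m n i r t : R}
    (h₁ : a * (r - i) = -b * t) (h₂ : m * a ^ 2 * (r + i) = n * b ^ 2 * t) :
    m * a ^ 3 * (r ^ 2 - i ^ 2) + n * b ^ 3 * t ^ 2 = 0 := by
  linear_combination (m * a ^ 2 * (r + i)) * h₁ - (b * t) * h₂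

theorem incident_eq_zero_of_no_transmission {K : Type*} [Field K] [NeZero (2 : K)]
    {a m i r : K} (ha : a ≠ 0) (hm : m ≠ 0)
    (h₁ : a * (r - i) = 0) (h₂ : m * a ^ 2 * (r + i) = 0) : i = 0 := by
  have hsub : r - i = 0 := (mul_eq_zero.mp h₁).resolve_left ha
  have hadd : r + i = 0 := (mul_eq_zero.mp h₂).resolve_left (by positivity)
  have htwo : (2 : K) * i = 0 := by linear_combination hadd - hsub
  exact (mul_eq_zero.mp htwo).resolve_left two_ne_zero

theorem stmt_17_general (ρp ρm csp csm ξp ξm SHI SHR SHT : ℝ)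
    (hρp : 0 < ρp) (hcsp : 0 < csp)
    (hξp : 0 < ξp)
    (h1 : ξp * (SHR - SHI) = -ξm * SHT)
    (h2 : (ρp * csp ^ 2) * ξp ^ 2 * (SHR + SHI) = (ρm * csm ^ 2) * ξm ^ 2 * SHT) :
    ρp * csp ^ 2 * ξp ^ 3 * (SHR ^ 2 - SHI ^ 2)
        + ρm * csm ^ 2 * ξm ^ 3 * SHT ^ 2 = 0 ∧
    (SHI ≠ 0 → SHT ≠ 0) := by
  refine ⟨interface_energy_identity h1 h2, fun hI hT => hI ?_⟩
  subst hT
  exact incident_eq_zero_of_no_transmission (m := ρp * csp ^ 2) hξp.ne' (by positivity)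
    (by rw [h1]; ring) (by rw [h2]; ring)

/-- SH energy identity at an elastic interface: if
`ξ₊(SH_R − SH_I) = −ξ₋ SH_T` and `μ₊ξ₊²(SH_R + SH_I) = μ₋ξ₋² SH_T` with
`μ± = ρ± c_{s,±}²`, then
`ρ₊c_{s,+}²ξ₊³(SH_R² − SH_I²) + ρ₋c_{s,-}²ξ₋³SH_T² = 0`; in particular if
`SH_I ≠ 0` then `SH_T ≠ 0`. -/
theorem stmt_17 (ρp ρm csp csm ξp ξm SHI SHR SHT : ℝ)
    (hρp : 0 < ρp) (hρm : 0 < ρm) (hcsp : 0 < csp) (hcsm : 0 < csm)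
    (hξp : 0 < ξp) (hξm : 0 < ξm)
    (h1 : ξp * (SHR - SHI) = -ξm * SHT)
    (h2 : (ρp * csp ^ 2) * ξp ^ 2 * (SHR + SHI) = (ρm * csm ^ 2) * ξm ^ 2 * SHT) :
    ρp * csp ^ 2 * ξp ^ 3 * (SHR ^ 2 - SHI ^ 2)
        + ρm * csm ^ 2 * ξm ^ 3 * SHT ^ 2 = 0 ∧
    (SHI ≠ 0 → SHT ≠ 0) :=
  stmt_17_general ρp ρm csp csm ξp ξm SHI SHR SHT hρp hcsp hξp h1 h2
end

section
/- Let A_in and A_out be the 4×2 matrices A_in = [[ξ₁, −ξ₃ˢ],[ξ₃ᵖ, ξ₁],[2μξ₃ᵖξ₁, μ(2ξ₁²−c_s⁻²τ²)],[−μ(2ξ₁²−c_s⁻²τ²), 2μξ₃ˢξ₁]] and A_out = [[ξ₁, ξ₃ˢ],[−ξ₃ᵖ, ξ₁],[−2μξ₃ᵖξ₁, μ(2ξ₁²−c_s⁻²τ²)],[−μ(2ξ₁²−c_s⁻²τ²), −2μξ₃ˢξ₁]]. Then (A_in+A_out)/2 and (A_out−A_in)/2 each have only one nonzero entry per row arranged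 in 2×2 blocks, and the two resulting 2×2 systems have determinants μ c_s⁻²τ² ξ₃ᵖ and μ c_s⁻²τ² ξ₃ˢ respectively; consequently, if τ ≠ 0, μ > 0, and ξ₃ᵖ, ξ₃ˢ are nonzero (real or pure imaginary with positive imaginary part), the 4×4 matrix (A_in | A_out) is invertible. -/
/-!
Writing `A_in = S - D` and `A_out = S + D` with `S`, `D` the half-sum and half-difference,
`(A_in | A_out) = (S | D) * !![1, 1; -1, 1]` blockwise, and the block factor has determinant `4`.
Each row of `(S | D)` has one nonzero entry in `S` and one in `D`; rows `2, 3` use columns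
`2, 3` and rows `1, 4` use columns `1, 4`, so `det (S | D)` is the product of the two `2 × 2`
determinants. These are nonzero because `μ (2ξ₁² - c_s⁻²τ²) - 2μξ₁² = -μ c_s⁻²τ²`.
-/

namespace Matrix

variable {R : Type*} [CommRing R]

theorem det_fin_four_of_block_pattern (a b c d e f g h : R) :
    !![a, 0, 0, b; 0, c, d, 0; 0, e, f, 0; g, 0, 0, h].det
      = !![a, b; g, h].det * !![c, d; e, f].det := by
  simp [det_succ_row_zero, Fin.sum_univ_succ, Fin.succAbove]
  ring

/-- The determinant of `(S - D | S + D)` for `S`, `D` with the sparsity pattern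
`!![s₁, 0; 0, s₂; 0, s₃; s₄, 0]`, `!![0, d₁; d₂, 0; d₃, 0; 0, d₄]`. -/
theorem det_fin_four_sub_add_cols (s₁ d₁ s₂ d₂ s₃ d₃ s₄ d₄ : R) :
    !![s₁, -d₁, s₁, d₁; -d₂, s₂, d₂, s₂; -d₃, s₃, d₃, s₃; s₄, -d₄, s₄, d₄].det
      = 4 * !![d₂, s₂; d₃, s₃].det * !![d₁, s₁; d₄, s₄].det := by
  have hfactor : !![s₁, -d₁, s₁, d₁; -d₂, s₂, d₂, s₂; -d₃, s₃, d₃, s₃; s₄, -d₄, s₄, d₄]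
      = !![s₁, 0, 0, d₁; 0, s₂, d₂, 0; 0, s₃, d₃, 0; s₄, 0, 0, d₄]
        * !![1, 0, 1, 0; 0, 1, 0, 1; -1, 0, 1, 0; 0, -1, 0, 1] := by
    ext i j
    fin_cases i <;> fin_cases j <;> simp [mul_apply, Fin.sum_univ_succ]
  have hcolumnOps : (!![1, 0, 1, 0; 0, 1, 0, 1; -1, 0, 1, 0; 0, -1, 0, 1] :
      Matrix (Fin 4) (Fin 4) R).det = 4 := by
    simp [det_succ_row_zero, Fin.sum_univ_succ, Fin.succAbove]
    norm_num
  rw [hfactor, det_mul, det_fin_four_of_block_pattern, hcolumnOps]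
  simp only [det_fin_two_of]
  ring

end Matrix

/-- Ellipticity of the elastic Cauchy boundary value problem (Lemma `lemma_A`):
the half-sum and half-difference of `A_in`, `A_out` are block matrices with one
nonzero entry per row, the two resulting `2×2` systems have determinants
`μ c_s⁻²τ² ξ₃ᵖ` and `μ c_s⁻²τ² ξ₃ˢ`, and consequently the `4×4` matrix
`(A_in | A_out)` is invertible when `τ ≠ 0`, `μ > 0` and `ξ₃ᵖ, ξ₃ˢ` are nonzero
real or pure imaginary with positive imaginary part. -/
theorem stmt_19 (μ cs τ ξ1 : ℝ) (hμ : 0 < μ) (hcs : 0 < cs) (hτ : τ ≠ 0)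
    (ξ3p ξ3s : ℂ)
    (hξ3p : ξ3p ≠ 0 ∧ (ξ3p.im = 0 ∨ (ξ3p.re = 0 ∧ 0 < ξ3p.im)))
    (hξ3s : ξ3s ≠ 0 ∧ (ξ3s.im = 0 ∨ (ξ3s.re = 0 ∧ 0 < ξ3s.im))) :
    let q : ℂ := ((μ * (2 * ξ1 ^ 2 - τ ^ 2 / cs ^ 2) : ℝ) : ℂ)
    let Ain : Matrix (Fin 4) (Fin 2) ℂ :=
      !![(ξ1 : ℂ), -ξ3s;
         ξ3p, (ξ1 : ℂ);
         2 * (μ : ℂ) * ξ3p * (ξ1 : ℂ), q;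
         -q, 2 * (μ : ℂ) * ξ3s * (ξ1 : ℂ)]
    let Aout : Matrix (Fin 4) (Fin 2) ℂ :=
      !![(ξ1 : ℂ), ξ3s;
         -ξ3p, (ξ1 : ℂ);
         -(2 * (μ : ℂ) * ξ3p * (ξ1 : ℂ)), q;
         -q, -(2 * (μ : ℂ) * ξ3s * (ξ1 : ℂ))]
    ((1 / 2 : ℂ) • (Ain + Aout)
        = !![(ξ1 : ℂ), 0; 0, (ξ1 : ℂ); 0, q; -q, 0]) ∧
    ((1 / 2 : ℂ) • (Aout - Ain)
        = !![0, ξ3s; -ξ3p, 0; -(2 * (μ : ℂ) * ξ3p * (ξ1 : ℂ)), 0;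
             0, -(2 * (μ : ℂ) * ξ3s * (ξ1 : ℂ))]) ∧
    (Matrix.det !![-ξ3p, (ξ1 : ℂ); -(2 * (μ : ℂ) * ξ3p * (ξ1 : ℂ)), q]
        = ((μ / cs ^ 2 * τ ^ 2 : ℝ) : ℂ) * ξ3p) ∧
    (Matrix.det !![ξ3s, (ξ1 : ℂ); -(2 * (μ : ℂ) * ξ3s * (ξ1 : ℂ)), -q]
        = ((μ / cs ^ 2 * τ ^ 2 : ℝ) : ℂ) * ξ3s) ∧
    IsUnit (Matrix.det
      !![(ξ1 : ℂ), -ξ3s, (ξ1 : ℂ), ξ3s;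
         ξ3p, (ξ1 : ℂ), -ξ3p, (ξ1 : ℂ);
         2 * (μ : ℂ) * ξ3p * (ξ1 : ℂ), q, -(2 * (μ : ℂ) * ξ3p * (ξ1 : ℂ)), q;
         -q, 2 * (μ : ℂ) * ξ3s * (ξ1 : ℂ), -q, -(2 * (μ : ℂ) * ξ3s * (ξ1 : ℂ))]) := by
  intro q Ain Aout
  have hdet_p : Matrix.det !![-ξ3p, (ξ1 : ℂ); -(2 * (μ : ℂ) * ξ3p * (ξ1 : ℂ)), q]
      = ((μ / cs ^ 2 * τ ^ 2 : ℝ) : ℂ) * ξ3p := by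
    rw [Matrix.det_fin_two_of]; push_cast [q]; ring
  have hdet_s : Matrix.det !![ξ3s, (ξ1 : ℂ); -(2 * (μ : ℂ) * ξ3s * (ξ1 : ℂ)), -q]
      = ((μ / cs ^ 2 * τ ^ 2 : ℝ) : ℂ) * ξ3s := by
    rw [Matrix.det_fin_two_of]; push_cast [q]; ring
  refine ⟨?_, ?_, hdet_p, hdet_s, ?_⟩
  · ext i j; fin_cases i <;> fin_cases j <;> simp [Ain, Aout] <;> ring
  · ext i j; fin_cases i <;> fin_cases j <;> simp [Ain, Aout] <;> ring
  · have hblocks := Matrix.det_fin_four_sub_add_cols (ξ1 : ℂ) ξ3s (ξ1 : ℂ) (-ξ3p) q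
      (-(2 * (μ : ℂ) * ξ3p * (ξ1 : ℂ))) (-q) (-(2 * (μ : ℂ) * ξ3s * (ξ1 : ℂ)))
    simp only [neg_neg] at hblocks
    have hscale : ((μ / cs ^ 2 * τ ^ 2 : ℝ) : ℂ) ≠ 0 := by
      exact_mod_cast (by positivity : μ / cs ^ 2 * τ ^ 2 ≠ 0)
    rw [hblocks, hdet_p, hdet_s, isUnit_iff_ne_zero]
    exact mul_ne_zero (mul_ne_zero (by norm_num) (mul_ne_zero hscale hξ3p.1))
      (mul_ne_zero hscale hξ3s.1)
end
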